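/- arXiv:2407.15585 — 4 statements merged into one kernel-verified Lean document; each statement's English description precedes it below -/
import Mathlib

section
/- Let A ⊆ ℝ^m be finite and let F be its frame (the set of extreme points of vrs(A) that lie in A). Then vrs(F) = vrs(A). -/
open scoped Classical
open Finset

noncomputable section

/-- The VRS (free-disposal convex) hull of a finite set of points in ℝ^m. -/
def vrs {m : ℕ} (S : Finset (Fin m → ℝ)) : Set (Fin m → ℝ) :=
  {z | ∃ l : (Fin m → ℝ) → ℝ, (∀ a, 0 ≤ l a) ∧ (∑ a ∈ S, l a) = 1 ∧
    ∀ k, z k ≤ ∑ a ∈ S, l a * a k}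

/-- The frame of `A`: the points of `A` that are extreme points of `vrs A`. -/
def frame {m : ℕ} (A : Finset (Fin m → ℝ)) : Finset (Fin m → ℝ) :=
  A.filter fun a => a ∈ Set.extremePoints ℝ (vrs A)

/-!
Take `B ⊆ A` of least cardinality with `vrs B = vrs A`. By minimality no `b ∈ B` lies in
`vrs (B \ {b})`, and such a point is extreme in `vrs B`: if `b` lies in an open segment of
`vrs B`, the combined weights of the endpoints must put all their mass on `b` (otherwise
renormalizing the remaining weights places `b` in `vrs (B \ {b})`), so both endpoints lie
below `b`, and `b` is an extreme point of the orthant `Iic b`. Hence `B ⊆ frame A ⊆ A`.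
-/

section OrderedModule

variable {E : Type*} [AddCommGroup E] [PartialOrder E] [IsOrderedAddMonoid E] [Module ℝ E]

theorem mem_extremePoints_Iic [PosSMulMono ℝ E] (a : E) :
    a ∈ Set.extremePoints ℝ (Set.Iic a) := by
  refine mem_extremePoints_iff_left.2 ⟨le_rfl, ?_⟩
  rintro x₁ (hx₁ : x₁ ≤ a) x₂ (hx₂ : x₂ ≤ a) ⟨t₁, t₂, ht₁, ht₂, ht, hx⟩
  have hsum : t₁ • (a - x₁) + t₂ • (a - x₂) = 0 := by
    rw [smul_sub, smul_sub, sub_add_sub_comm, hx, ← add_smul, ht, one_smul, sub_self]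
  have h₁ := ((add_eq_zero_iff_of_nonneg (smul_nonneg ht₁.le (sub_nonneg.2 hx₁))
    (smul_nonneg ht₂.le (sub_nonneg.2 hx₂))).1 hsum).1
  exact (sub_eq_zero.1 ((smul_eq_zero.1 h₁).resolve_left ht₁.ne')).symm

theorem smul_add_smul_le_sum_smul [PosSMulMono ℝ E] {ι : Type*} {s : Finset ι} {v : ι → E}
    {l₁ l₂ : ι → ℝ} {x₁ x₂ : E} {t₁ t₂ : ℝ} (ht₁ : 0 ≤ t₁) (ht₂ : 0 ≤ t₂)
    (h₁ : x₁ ≤ ∑ i ∈ s, l₁ i • v i) (h₂ : x₂ ≤ ∑ i ∈ s, l₂ i • v i) :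
    t₁ • x₁ + t₂ • x₂ ≤ ∑ i ∈ s, (t₁ * l₁ i + t₂ * l₂ i) • v i := by
  calc t₁ • x₁ + t₂ • x₂ ≤ t₁ • ∑ i ∈ s, l₁ i • v i + t₂ • ∑ i ∈ s, l₂ i • v i :=
        add_le_add (smul_le_smul_of_nonneg_left h₁ ht₁) (smul_le_smul_of_nonneg_left h₂ ht₂)
    _ = ∑ i ∈ s, (t₁ * l₁ i + t₂ * l₂ i) • v i := by
        simp only [smul_sum, add_smul, mul_smul, sum_add_distrib]

end OrderedModule

theorem sum_smul_eq_of_weight_eq_one {E ι : Type*} [AddCommMonoid E] [Module ℝ E]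
    {s : Finset ι} {v : ι → E} {l : ι → ℝ} (hl₀ : ∀ i ∈ s, 0 ≤ l i) (hl₁ : ∑ i ∈ s, l i = 1) {j : ι}
    (hj : j ∈ s) (hlj : l j = 1) : ∑ i ∈ s, l i • v i = v j := by
  have hrest : ∑ i ∈ s.erase j, l i = 0 := by
    rw [← add_sum_erase s l hj, hlj] at hl₁; linarith
  have hzero : ∀ i ∈ s.erase j, l i = 0 :=
    (sum_eq_zero_iff_of_nonneg fun i hi => hl₀ i (mem_of_mem_erase hi)).1 hrest
  rw [← add_sum_erase s _ hj, sum_eq_zero fun i hi => by rw [hzero i hi, zero_smul], add_zero,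
    hlj, one_smul]

section vrs

variable {m : ℕ} {S T A : Finset (Fin m → ℝ)} {z w a : Fin m → ℝ}

theorem mem_vrs_iff : z ∈ vrs S ↔ ∃ l : (Fin m → ℝ) → ℝ, (∀ a, 0 ≤ l a) ∧ ∑ a ∈ S, l a = 1 ∧
    z ≤ ∑ a ∈ S, l a • a := by
  simp only [vrs, Set.mem_ofPred_eq, Pi.le_def, Finset.sum_apply, Pi.smul_apply, smul_eq_mul]

theorem self_mem_vrs (ha : a ∈ S) : a ∈ vrs S := by
  refine mem_vrs_iff.2 ⟨fun b => if b = a then 1 else 0, fun b => ?_, by simp [ha],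
    by simp [ite_smul, ha]⟩
  dsimp only
  split_ifs <;> norm_num

theorem convex_vrs : Convex ℝ (vrs S) := by
  intro x₁ hx₁ x₂ hx₂ t₁ t₂ ht₁ ht₂ ht
  obtain ⟨l₁, hl₁₀, hl₁₁, hx₁⟩ := mem_vrs_iff.1 hx₁
  obtain ⟨l₂, hl₂₀, hl₂₁, hx₂⟩ := mem_vrs_iff.1 hx₂
  refine mem_vrs_iff.2 ⟨fun a => t₁ * l₁ a + t₂ * l₂ a,
    fun a => add_nonneg (mul_nonneg ht₁ (hl₁₀ a)) (mul_nonneg ht₂ (hl₂₀ a)), ?_,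
    smul_add_smul_le_sum_smul ht₁ ht₂ hx₁ hx₂⟩
  simp only [sum_add_distrib, ← mul_sum, hl₁₁, hl₂₁, mul_one, ht]

theorem mem_vrs_of_le (hzw : z ≤ w) (hw : w ∈ vrs S) : z ∈ vrs S := by
  obtain ⟨l, hl₀, hl₁, hw⟩ := mem_vrs_iff.1 hw
  exact mem_vrs_iff.2 ⟨l, hl₀, hl₁, hzw.trans hw⟩

theorem vrs_subset_vrs (h : (S : Set (Fin m → ℝ)) ⊆ vrs T) : vrs S ⊆ vrs T := by
  intro z hz
  obtain ⟨l, hl₀, hl₁, hz⟩ := mem_vrs_iff.1 hz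
  exact mem_vrs_of_le hz (convex_vrs.sum_mem (fun a _ => hl₀ a) hl₁ h)

theorem vrs_mono (h : S ⊆ T) : vrs S ⊆ vrs T :=
  vrs_subset_vrs fun _ ha => self_mem_vrs (h ha)

theorem vrs_erase_eq (h : a ∈ vrs (A.erase a)) : vrs (A.erase a) = vrs A := by
  refine (vrs_mono (erase_subset a A)).antisymm (vrs_subset_vrs fun b hb => ?_)
  by_cases hba : b = a
  · exact hba ▸ h
  · exact self_mem_vrs (mem_erase.2 ⟨hba, hb⟩)

theorem mem_vrs_erase_of_weight_lt_one {l : (Fin m → ℝ) → ℝ} (hl₀ : ∀ b, 0 ≤ l b)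
    (hl₁ : ∑ b ∈ A, l b = 1) (ha : a ∈ A) (hle : a ≤ ∑ b ∈ A, l b • b) (hla : l a < 1) :
    a ∈ vrs (A.erase a) := by
  have hc : 0 < 1 - l a := sub_pos.2 hla
  have hrest : ∑ b ∈ A.erase a, l b = 1 - l a := by
    rw [← add_sum_erase A l ha] at hl₁; linarith
  refine mem_vrs_iff.2 ⟨fun b => (1 - l a)⁻¹ * l b,
    fun b => mul_nonneg (inv_nonneg.2 hc.le) (hl₀ b), ?_, ?_⟩
  · rw [← mul_sum, hrest, inv_mul_cancel₀ hc.ne']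
  · simp only [mul_smul, ← smul_sum]
    rw [le_inv_smul_iff_of_pos hc, sub_smul, one_smul, sub_le_iff_le_add']
    rwa [← add_sum_erase A _ ha] at hle

theorem mem_extremePoints_vrs_of_notMem_vrs_erase (ha : a ∈ A) (h : a ∉ vrs (A.erase a)) :
    a ∈ Set.extremePoints ℝ (vrs A) := by
  refine mem_extremePoints_iff_left.2 ⟨self_mem_vrs ha, ?_⟩
  rintro x₁ hx₁ x₂ hx₂ ⟨t₁, t₂, ht₁, ht₂, ht, hx⟩
  obtain ⟨l₁, hl₁₀, hl₁₁, hx₁⟩ := mem_vrs_iff.1 hx₁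
  obtain ⟨l₂, hl₂₀, hl₂₁, hx₂⟩ := mem_vrs_iff.1 hx₂
  have hl₁a : l₁ a ≤ 1 := hl₁₁ ▸ single_le_sum (fun b _ => hl₁₀ b) ha
  have hl₂a : l₂ a ≤ 1 := hl₂₁ ▸ single_le_sum (fun b _ => hl₂₀ b) ha
  have hmass : t₁ * l₁ a + t₂ * l₂ a = 1 := by
    by_contra hne
    refine h (mem_vrs_erase_of_weight_lt_one
      (fun b => add_nonneg (mul_nonneg ht₁.le (hl₁₀ b)) (mul_nonneg ht₂.le (hl₂₀ b))) ?_ ha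
      (hx ▸ smul_add_smul_le_sum_smul ht₁.le ht₂.le hx₁ hx₂) (lt_of_le_of_ne ?_ hne))
    · simp only [sum_add_distrib, ← mul_sum, hl₁₁, hl₂₁, mul_one, ht]
    · nlinarith
  have hx₁a : x₁ ≤ a :=
    hx₁.trans (sum_smul_eq_of_weight_eq_one (fun b _ => hl₁₀ b) hl₁₁ ha (by nlinarith)).le
  have hx₂a : x₂ ≤ a :=
    hx₂.trans (sum_smul_eq_of_weight_eq_one (fun b _ => hl₂₀ b) hl₂₁ ha (by nlinarith)).le
  exact (mem_extremePoints_iff_left.1 (mem_extremePoints_Iic a)).2 x₁ hx₁a x₂ hx₂a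
    ⟨t₁, t₂, ht₁, ht₂, ht, hx⟩

end vrs

theorem stmt2 {m : ℕ} (A : Finset (Fin m → ℝ)) : vrs (frame A) = vrs A := by
  obtain ⟨B, hB, hBmin⟩ := exists_min_image ({B ∈ A.powerset | vrs B = vrs A}) card
    ⟨A, by simp⟩
  rw [mem_filter, mem_powerset] at hB
  have hBframe : B ⊆ frame A := by
    intro b hb
    refine mem_filter.2 ⟨hB.1 hb, hB.2 ▸ mem_extremePoints_vrs_of_notMem_vrs_erase hb fun hb' => ?_⟩
    have hBb : B.erase b ∈ {B ∈ A.powerset | vrs B = vrs A} :=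
      mem_filter.2 ⟨mem_powerset.2 ((erase_subset b B).trans hB.1), (vrs_erase_eq hb').trans hB.2⟩
    exact (card_erase_lt_of_mem hb).not_ge (hBmin _ hBb)
  refine (vrs_mono (filter_subset _ _)).antisymm ?_
  calc vrs A = vrs B := hB.2.symm
    _ ⊆ vrs (frame A) := vrs_mono hBframe
end
end

section
/- Let A ⊆ ℝ^m be finite and nonempty, and fix a coordinate k. Any point a* ∈ A maximizing the k-th coordinate, with ties broken by lexicographic maximality over the remaining coordinates, is an extreme point of vrs(A). (This justifies the 'dimension sorting' preprocessor: it conclusively identifies between 1 and m extreme-efficient DMUs.) -/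
/-!
The tie-breaking rule says that `a*` is the strict maximum on `A` of the linear map
`a ↦ (a k, a 0, …, a (m-1))` into `ℝ^(m+1)` ordered lexicographically. This map is strictly
monotone for the coordinatewise order, and every point of `vrs A` lies below a convex combination
of `A`; hence `a*` is also the strict maximum of the map on `vrs A`, and a strict maximiser of a
linear map into an ordered vector space is an extreme point.
-/

open scoped Classical
open Finset

noncomputable section

instance Pi.Lex.posSMulStrictMono {ι 𝕜 α : Type*} [LinearOrder ι] [Zero 𝕜] [Preorder 𝕜]
    [PartialOrder α] [SMul 𝕜 α] [PosSMulStrictMono 𝕜 α] : PosSMulStrictMono 𝕜 (Lex (ι → α)) where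
  smul_lt_smul_of_pos_left c hc _ _ := fun ⟨i, heq, hlt⟩ =>
    ⟨i, fun j hj => congrArg (c • ·) (heq j hj), smul_lt_smul_of_pos_left hlt hc⟩

theorem mem_extremePoints_of_forall_apply_lt {𝕜 E V : Type*} [Semiring 𝕜] [PartialOrder 𝕜]
    [AddCommGroup E] [Module 𝕜 E] [AddCommGroup V] [PartialOrder V] [IsOrderedAddMonoid V]
    [Module 𝕜 V] [PosSMulStrictMono 𝕜 V] (f : E →ₗ[𝕜] V) {S : Set E} {x : E} (hx : x ∈ S)
    (hmax : ∀ y ∈ S, y ≠ x → f y < f x) : x ∈ Set.extremePoints 𝕜 S := by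
  refine ⟨hx, fun x₁ hx₁ x₂ hx₂ ⟨a, b, ha, hb, hab, hseg⟩ => ?_⟩
  by_contra hne
  have hle₂ : f x₂ ≤ f x := by
    rcases eq_or_ne x₂ x with rfl | h
    · exact le_rfl
    · exact (hmax x₂ hx₂ h).le
  have : f x < f x := calc
    f x = a • f x₁ + b • f x₂ := by rw [← hseg, map_add, map_smul, map_smul]
    _ < a • f x + b • f x :=
      add_lt_add_of_lt_of_le (smul_lt_smul_of_pos_left (hmax x₁ hx₁ hne) ha)
        (smul_le_smul_of_nonneg_left hle₂ hb.le)
    _ = f x := by rw [← add_smul, hab, one_smul]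
  exact this.false

theorem Finset.sum_smul_lt_of_forall_lt {ι V : Type*} [AddCommGroup V] [PartialOrder V]
    [IsOrderedAddMonoid V] [Module ℝ V] [PosSMulStrictMono ℝ V] {s : Finset ι} {l : ι → ℝ}
    {g : ι → V} {i₀ : ι} (hl0 : ∀ i, 0 ≤ l i) (hl1 : ∑ i ∈ s, l i = 1)
    (hlt : ∀ i ∈ s, i ≠ i₀ → g i < g i₀) (hsupp : ∃ i ∈ s, i ≠ i₀ ∧ l i ≠ 0) :
    ∑ i ∈ s, l i • g i < g i₀ := by
  obtain ⟨i₁, hi₁, hne, hl⟩ := hsupp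
  calc ∑ i ∈ s, l i • g i < ∑ i ∈ s, l i • g i₀ := by
        refine Finset.sum_lt_sum (fun i hi => ?_)
          ⟨i₁, hi₁, smul_lt_smul_of_pos_left (hlt i₁ hi₁ hne) ((hl0 i₁).lt_of_ne' hl)⟩
        rcases eq_or_ne i i₀ with rfl | h
        · exact le_rfl
        · exact smul_le_smul_of_nonneg_left (hlt i hi h).le (hl0 i)
    _ = g i₀ := by rw [← Finset.sum_smul, hl1, one_smul]

section

variable {m : ℕ} {A : Finset (Fin m → ℝ)}

theorem exists_le_sum_smul_of_mem_vrs {z : Fin m → ℝ} (hz : z ∈ vrs A) :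
    ∃ l : (Fin m → ℝ) → ℝ, (∀ a, 0 ≤ l a) ∧ ∑ a ∈ A, l a = 1 ∧ z ≤ ∑ a ∈ A, l a • a := by
  obtain ⟨l, hl0, hl1, hle⟩ := hz
  exact ⟨l, hl0, hl1, fun j => by
    simpa only [Finset.sum_apply, Pi.smul_apply, smul_eq_mul] using hle j⟩

theorem subset_vrs : (A : Set (Fin m → ℝ)) ⊆ vrs A := fun a (ha : a ∈ A) => by
  refine ⟨Pi.single a 1, fun b => ?_, by simp [ha], fun j => ?_⟩
  · by_cases h : b = a <;> simp [h]
  · simp [Pi.single_apply, ha]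

variable {V : Type*} [AddCommGroup V] [PartialOrder V] [IsOrderedAddMonoid V] [Module ℝ V]
  [PosSMulStrictMono ℝ V] {f : (Fin m → ℝ) →ₗ[ℝ] V} {astar : Fin m → ℝ}

theorem apply_lt_of_mem_vrs (hf : StrictMono f) (ha : astar ∈ A)
    (hmax : ∀ a ∈ A, a ≠ astar → f a < f astar) {z : Fin m → ℝ} (hz : z ∈ vrs A)
    (hne : z ≠ astar) : f z < f astar := by
  obtain ⟨l, hl0, hl1, hzle⟩ := exists_le_sum_smul_of_mem_vrs hz
  by_cases hsupp : ∃ a ∈ A, a ≠ astar ∧ l a ≠ 0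
  · calc f z ≤ f (∑ a ∈ A, l a • a) := hf.monotone hzle
      _ = ∑ a ∈ A, l a • f a := by simp only [map_sum, map_smul]
      _ < f astar := Finset.sum_smul_lt_of_forall_lt hl0 hl1 hmax hsupp
  · have hzero : ∀ a ∈ A, a ≠ astar → l a = 0 := fun a haA hne =>
      by_contra fun hl => hsupp ⟨a, haA, hne, hl⟩
    have hone : l astar = 1 := by
      rwa [Finset.sum_eq_single astar hzero (absurd ha)] at hl1
    have hcomb : ∑ a ∈ A, l a • a = astar := by
      rw [Finset.sum_eq_single astar (fun a haA hne => by rw [hzero a haA hne, zero_smul])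
        (absurd ha), hone, one_smul]
    exact hf (lt_of_le_of_ne (hcomb ▸ hzle) hne)

theorem mem_extremePoints_vrs_of_forall_apply_lt (hf : StrictMono f) (ha : astar ∈ A)
    (hmax : ∀ a ∈ A, a ≠ astar → f a < f astar) : astar ∈ Set.extremePoints ℝ (vrs A) :=
  mem_extremePoints_of_forall_apply_lt f (subset_vrs ha) fun _ hz hne =>
    apply_lt_of_mem_vrs hf ha hmax hz hne

end

def lexKey {m : ℕ} (k : Fin m) : (Fin m → ℝ) →ₗ[ℝ] Lex (Fin (m + 1) → ℝ) :=
  (toLexLinearEquiv ℝ _).toLinearMap ∘ₗ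
    LinearMap.pi (Fin.cons (LinearMap.proj k) LinearMap.proj)

theorem lexKey_apply {m : ℕ} (k : Fin m) (z : Fin m → ℝ) :
    lexKey k z = toLex (Fin.cons (z k) z : Fin (m + 1) → ℝ) :=
  congrArg toLex (funext fun i => by cases i using Fin.cases <;> rfl)

theorem lexKey_strictMono {m : ℕ} (k : Fin m) : StrictMono (lexKey k) := by
  refine Monotone.strictMono_of_injective (fun z w h => ?_) fun z w h => ?_
  · simpa only [lexKey_apply] using Pi.toLex_monotone (Fin.cons_le_cons.2 ⟨h k, h⟩)
  · simp only [lexKey_apply, toLex_inj] at h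
    exact (Fin.cons_injective2 h).2

theorem lexKey_lt_lexKey {m : ℕ} (k : Fin m) {a b : Fin m → ℝ}
    (h : a k < b k ∨ a k = b k ∧ ∃ j, a j < b j ∧ ∀ i < j, a i = b i) :
    lexKey k a < lexKey k b := by
  rw [lexKey_apply, lexKey_apply]
  rcases h with hk | ⟨hk, j, hj, hbefore⟩
  · exact ⟨0, fun i hi => absurd hi (Fin.not_lt_zero i), hk⟩
  · refine ⟨j.succ, fun i hi => ?_, hj⟩
    cases i using Fin.cases with
    | zero => exact hk
    | succ i => exact hbefore i (Fin.succ_lt_succ_iff.1 hi)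

theorem stmt4_general {m : ℕ} (A : Finset (Fin m → ℝ)) (k : Fin m)
    (astar : Fin m → ℝ) (ha : astar ∈ A)
    (hmax : ∀ a ∈ A, a k ≤ astar k)
    (hlex : ∀ a ∈ A, a ≠ astar → a k = astar k →
      ∃ j : Fin m, a j < astar j ∧ ∀ i : Fin m, i < j → a i = astar i) :
    astar ∈ Set.extremePoints ℝ (vrs A) := by
  refine mem_extremePoints_vrs_of_forall_apply_lt (lexKey_strictMono k) ha fun a haA hne =>
    lexKey_lt_lexKey k ?_
  rcases (hmax a haA).lt_or_eq with hlt | heq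
  · exact .inl hlt
  · exact .inr ⟨heq, hlex a haA hne heq⟩

theorem stmt4 {m : ℕ} (A : Finset (Fin m → ℝ)) (hA : A.Nonempty) (k : Fin m)
    (astar : Fin m → ℝ) (ha : astar ∈ A)
    (hmax : ∀ a ∈ A, a k ≤ astar k)
    (hlex : ∀ a ∈ A, a ≠ astar → a k = astar k →
      ∃ j : Fin m, a j < astar j ∧ ∀ i : Fin m, i < j → a i = astar i) :
    astar ∈ Set.extremePoints ℝ (vrs A) :=
  stmt4_general A k astar ha hmax hlex
end
end

section
/- Let A ⊆ ℝ^m be finite with frame F, and suppose π ≥ 0 has all coordinates strictly positive. Then every element of argmax_{a ∈ A} ⟨π, a⟩ that is a vertex of the face {x ∈ conv(A) : ⟨π,x⟩ = max_{a∈A}⟨π,a⟩} is an extreme point of vrs(A). -/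
open scoped Classical
open Finset

noncomputable section

/-!
Because `π > 0`, the functional `φ = ⟨π, ·⟩` is strictly monotone for the coordinatewise order.
Now `vrs A` is the lower closure of `conv A`, so `φ` is bounded on `vrs A` by its maximum `M`
over `A`, and a point of `vrs A` with `φ = M` cannot lie strictly below a point of `conv A`.
Hence the level set `{φ = M}` meets `vrs A` exactly in the face of `conv A`. This face is the
set of maximizers of a linear functional on `vrs A`, so it is an extreme subset of `vrs A`, and
extreme points of an extreme subset are extreme points of the whole set.
-/

open Set Matrix

theorem isExtreme_setOf_eq_of_forall_le {E : Type*} [AddCommGroup E] [Module ℝ E]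
    {S : Set E} (φ : E →ₗ[ℝ] ℝ) {M : ℝ} (hle : ∀ x ∈ S, φ x ≤ M) :
    IsExtreme ℝ S {x ∈ S | φ x = M} := by
  refine ⟨fun x hx => hx.1, ?_⟩
  rintro x₁ hx₁ x₂ hx₂ x hx ⟨a, b, ha, hb, hab, hx_eq⟩
  have hφx : a * φ x₁ + b * φ x₂ = M := by
    rw [← hx.2, ← hx_eq, map_add, map_smul, map_smul, smul_eq_mul, smul_eq_mul]
  have h₁ := hle x₁ hx₁
  have h₂ := hle x₂ hx₂
  have hM : a * M ≤ a * φ x₁ := by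
    linear_combination mul_nonneg hb.le (sub_nonneg.2 h₂) - hφx + M * hab
  exact ⟨hx₁, le_antisymm h₁ (le_of_mul_le_mul_left hM ha)⟩

section LowerClosure

variable {E : Type*} {C : Set E} {φ : E → ℝ} {M : ℝ}

theorem forall_mem_lowerClosure_le [Preorder E] (hφ : Monotone φ) (hC : ∀ x ∈ C, φ x ≤ M) :
    ∀ z ∈ lowerClosure C, φ z ≤ M := by
  rintro z ⟨w, hw, hzw⟩
  exact (hφ hzw).trans (hC w hw)

theorem setOf_mem_lowerClosure_eq_eq [PartialOrder E] (hφ : StrictMono φ)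
    (hC : ∀ x ∈ C, φ x ≤ M) :
    {z ∈ (lowerClosure C : Set E) | φ z = M} = {x ∈ C | φ x = M} := by
  ext z
  refine ⟨fun ⟨⟨w, hw, hzw⟩, hz⟩ => ?_, fun ⟨hz, hφz⟩ => ⟨subset_lowerClosure hz, hφz⟩⟩
  obtain rfl : z = w := hzw.eq_of_not_lt fun hlt => (hφ hlt).not_ge (hz ▸ hC w hw)
  exact ⟨hw, hz⟩

end LowerClosure

theorem mem_extremePoints_lowerClosure {E : Type*} [AddCommGroup E] [PartialOrder E]
    [Module ℝ E] {C : Set E} {φ : E →ₗ[ℝ] ℝ} (hφ : StrictMono φ) {M : ℝ}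
    (hC : ∀ x ∈ C, φ x ≤ M) {x : E} (hx : x ∈ extremePoints ℝ {y ∈ C | φ y = M}) :
    x ∈ extremePoints ℝ (lowerClosure C : Set E) := by
  rw [← setOf_mem_lowerClosure_eq_eq hφ hC] at hx
  exact (isExtreme_setOf_eq_of_forall_le φ
    (forall_mem_lowerClosure_le hφ.monotone hC)).extremePoints_subset_extremePoints hx

theorem strictMono_dotProduct {ι : Type*} [Fintype ι] {π : ι → ℝ} (hπ : ∀ i, 0 < π i) :
    StrictMono (π ⬝ᵥ ·) := by
  intro x y hxy
  obtain ⟨hle, i, hi⟩ := Pi.lt_def.mp hxy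
  exact Finset.sum_lt_sum (fun j _ => mul_le_mul_of_nonneg_left (hle j) (hπ j).le)
    ⟨i, Finset.mem_univ i, mul_lt_mul_of_pos_left hi (hπ i)⟩

theorem vrs_eq_lowerClosure {m : ℕ} (A : Finset (Fin m → ℝ)) :
    vrs A = lowerClosure (convexHull ℝ (A : Set (Fin m → ℝ))) := by
  ext z
  simp only [vrs, SetLike.mem_coe, mem_lowerClosure, Finset.mem_convexHull']
  constructor
  · rintro ⟨l, hl0, hl1, hz⟩
    refine ⟨∑ a ∈ A, l a • a, ⟨l, fun a _ => hl0 a, hl1, rfl⟩, fun k => ?_⟩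
    simpa only [Finset.sum_apply, Pi.smul_apply, smul_eq_mul] using hz k
  · rintro ⟨_, ⟨w, hw0, hw1, rfl⟩, hz⟩
    have hw : ∀ a ∈ A, max (w a) 0 = w a := fun a ha => max_eq_left (hw0 a ha)
    refine ⟨fun a => max (w a) 0, fun a => le_max_right _ _, ?_, fun k => ?_⟩
    · rw [Finset.sum_congr rfl hw, hw1]
    · simpa only [Finset.sum_apply, Pi.smul_apply, smul_eq_mul,
        Finset.sum_congr rfl fun a ha => congrArg (· * a k) (hw a ha)] using hz k

theorem stmt8_general {m : ℕ} (A : Finset (Fin m → ℝ)) (π : Fin m → ℝ) (hπ : ∀ i, 0 < π i)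
    (astar : Fin m → ℝ)
    (hmax : ∀ a ∈ A, ∑ i, π i * a i ≤ ∑ i, π i * astar i)
    (hvert : astar ∈ Set.extremePoints ℝ
      {x ∈ convexHull ℝ (A : Set (Fin m → ℝ)) | ∑ i, π i * x i = ∑ i, π i * astar i}) :
    astar ∈ Set.extremePoints ℝ (vrs A) := by
  have hhull : ∀ x ∈ convexHull ℝ (A : Set (Fin m → ℝ)),
      dotProductBilin ℝ ℝ π x ≤ π ⬝ᵥ astar :=
    fun x hx => convexHull_min hmax (convex_halfSpace_le (dotProductBilin ℝ ℝ π).isLinear _) hx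
  rw [vrs_eq_lowerClosure]
  exact mem_extremePoints_lowerClosure (φ := dotProductBilin ℝ ℝ π)
    (strictMono_dotProduct hπ) hhull hvert

theorem stmt8 {m : ℕ} (A : Finset (Fin m → ℝ)) (π : Fin m → ℝ) (hπ : ∀ i, 0 < π i)
    (astar : Fin m → ℝ) (ha : astar ∈ A)
    (hmax : ∀ a ∈ A, ∑ i, π i * a i ≤ ∑ i, π i * astar i)
    (hvert : astar ∈ Set.extremePoints ℝ
      {x ∈ convexHull ℝ (A : Set (Fin m → ℝ)) | ∑ i, π i * x i = ∑ i, π i * astar i}) :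
    astar ∈ Set.extremePoints ℝ (vrs A) :=
  stmt8_general A π hπ astar hmax hvert
end
end

section
/- For any nonempty finite S ⊆ ℝ^m, the VRS hull vrs(S) has nonempty topological interior in ℝ^m; its recession cone is exactly the nonpositive orthant {d ∈ ℝ^m : d ≤ 0}. -/
open scoped Classical
open Finset

noncomputable section

/-! `vrs S` is a lower set (free disposal) that is bounded above by the coordinatewise maximum of
`S`. A lower set containing `a` contains the orthant below `a`, which is a neighbourhood of `a - 1`.
A ray stays in a set bounded above only in directions `d ≤ 0`, and each such ray stays in a lower
set. -/

theorem IsLowerSet.interior_nonempty {ι : Type*} [Finite ι] {C : Set (ι → ℝ)}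
    (hC : IsLowerSet C) (hne : C.Nonempty) : (interior C).Nonempty := by
  obtain ⟨a, ha⟩ := hne
  refine ⟨fun i => a i - 1, mem_interior_iff_mem_nhds.2 ?_⟩
  exact Filter.mem_of_superset (pi_Iic_mem_nhds' fun i => sub_one_lt (a i)) (hC.Iic_subset ha)

theorem nonpos_of_forall_add_mul_le {x d b : ℝ} (h : ∀ t : ℝ, 0 ≤ t → x + t * d ≤ b) :
    d ≤ 0 := by
  by_contra! hd
  have hxb : x ≤ b := by simpa using h 0 le_rfl
  have := h ((b - x + 1) / d) (by positivity)
  rw [div_mul_cancel₀ _ hd.ne'] at this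
  linarith

theorem IsLowerSet.recessionCone_eq_nonpos {ι : Type*} {C : Set (ι → ℝ)}
    (hC : IsLowerSet C) (hne : C.Nonempty) (hbdd : BddAbove C) :
    {d : ι → ℝ | ∀ x ∈ C, ∀ t : ℝ, 0 ≤ t → x + t • d ∈ C} = {d : ι → ℝ | ∀ k, d k ≤ 0} := by
  ext d
  constructor
  · obtain ⟨x, hx⟩ := hne
    obtain ⟨b, hb⟩ := hbdd
    exact fun hd k => nonpos_of_forall_add_mul_le fun t ht => hb (hd x hx t ht) k
  · intro hd x hx t ht
    refine hC (fun k => ?_) hx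
    simpa using mul_nonpos_of_nonneg_of_nonpos ht (hd k)

section vrs

variable {m : ℕ} {S : Finset (Fin m → ℝ)}

theorem isLowerSet_vrs (S : Finset (Fin m → ℝ)) : IsLowerSet (vrs S) := by
  rintro z w hwz ⟨l, hl0, hl1, hle⟩
  exact ⟨l, hl0, hl1, fun k => (hwz k).trans (hle k)⟩

theorem mem_vrs_of_mem {a : Fin m → ℝ} (ha : a ∈ S) : a ∈ vrs S := by
  refine ⟨fun b => if b = a then 1 else 0, fun b => by positivity, by simp [ha], fun k => ?_⟩
  simp [ite_mul, ha]

theorem vrs_subset_Iic_sup' (hS : S.Nonempty) :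
    vrs S ⊆ Set.Iic fun k => S.sup' hS fun a => a k := by
  rintro z ⟨l, hl0, hl1, hle⟩ k
  calc z k ≤ ∑ a ∈ S, l a * a k := hle k
    _ ≤ ∑ a ∈ S, l a * S.sup' hS fun b => b k :=
        sum_le_sum fun a ha => mul_le_mul_of_nonneg_left (le_sup' (fun b => b k) ha) (hl0 a)
    _ = S.sup' hS fun b => b k := by rw [← sum_mul, hl1, one_mul]

end vrs

theorem stmt15 {m : ℕ} (S : Finset (Fin m → ℝ)) (hS : S.Nonempty) :
    (interior (vrs S)).Nonempty ∧
    {d : Fin m → ℝ | ∀ x ∈ vrs S, ∀ t : ℝ, 0 ≤ t → x + t • d ∈ vrs S} =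
      {d : Fin m → ℝ | ∀ k, d k ≤ 0} := by
  have hne : (vrs S).Nonempty := ⟨_, mem_vrs_of_mem hS.choose_spec⟩
  exact ⟨(isLowerSet_vrs S).interior_nonempty hne,
    (isLowerSet_vrs S).recessionCone_eq_nonpos hne ⟨_, vrs_subset_Iic_sup' hS⟩⟩
end
end
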